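/- Let g(z₁,z₂) = (1 − z₁)/(2 − z₁ − z₂), a holomorphic function on 𝔻². Then g is unbounded on 𝔻²: specifically, along the path z(θ) = ((1−θ²)e^{iθ}, (1−θ²)e^{−iθ}) one has |g(z(θ))| ≥ C/|θ| for some constant C > 0 and all small θ ≠ 0, so sup_{𝔻²} |g| = ∞. -/

import Mathlib

/-!
On the path `z(θ) = ((1-θ²)e^{iθ}, (1-θ²)e^{-iθ})` the two coordinates are conjugate, so the
denominator `2 - z₁ - z₂ = 2 - 2(1-θ²)cos θ` is real and of order `θ²`, while the numerator
`1 - z₁` has imaginary part `-(1-θ²) sin θ`, of order `θ`. Their quotient is of order `1/|θ|`.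
-/

open Complex

namespace BidiskUnbounded

noncomputable def g (z : ℂ × ℂ) : ℂ := (1 - z.1) / (2 - z.1 - z.2)

noncomputable def path (θ : ℝ) : ℂ × ℂ :=
  (((1 - θ ^ 2 : ℝ) : ℂ) * exp (I * θ), ((1 - θ ^ 2 : ℝ) : ℂ) * exp (-(I * θ)))

lemma exp_neg_I_mul_ofReal (θ : ℝ) : exp (-(I * θ)) = exp (I * ↑(-θ)) := by
  push_cast; ring_nf

lemma norm_ofReal_mul_exp_I_mul (r θ : ℝ) : ‖(r : ℂ) * exp (I * θ)‖ = |r| := by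
  rw [norm_mul, norm_exp_I_mul_ofReal, norm_real, Real.norm_eq_abs, mul_one]

lemma two_sub_mul_exp_sub_mul_exp_neg (r θ : ℝ) :
    2 - (r : ℂ) * exp (I * θ) - r * exp (-(I * θ)) = ((2 - 2 * r * Real.cos θ : ℝ) : ℂ) := by
  rw [exp_neg_I_mul_ofReal, mul_comm I, mul_comm I, exp_mul_I, exp_mul_I]
  push_cast
  rw [cos_neg, sin_neg]
  ring

lemma im_one_sub_mul_exp_I_mul (r θ : ℝ) : (1 - (r : ℂ) * exp (I * θ)).im = -(r * Real.sin θ) := by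
  rw [mul_comm I, exp_mul_I, ← ofReal_cos, ← ofReal_sin]
  simp only [sub_im, one_im, mul_im, add_im, add_re, mul_re, ofReal_re, ofReal_im, I_re, I_im]
  ring

lemma two_sub_two_mul_cos_pos_and_le {θ : ℝ} (hθ : θ ≠ 0) (hθ1 : θ ^ 2 < 1) :
    0 < 2 - 2 * (1 - θ ^ 2) * Real.cos θ ∧ 2 - 2 * (1 - θ ^ 2) * Real.cos θ ≤ 3 * θ ^ 2 := by
  have hpos : 0 < θ ^ 2 := by positivity
  have hcos_le := Real.cos_le_one θ
  have hcos_ge : 1 - θ ^ 2 / 2 ≤ Real.cos θ := Real.one_sub_sq_div_two_le_cos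
  constructor <;> nlinarith

lemma norm_path_fst (θ : ℝ) : ‖(path θ).1‖ = |1 - θ ^ 2| := norm_ofReal_mul_exp_I_mul _ _

lemma norm_path_snd (θ : ℝ) : ‖(path θ).2‖ = |1 - θ ^ 2| := by
  rw [path, exp_neg_I_mul_ofReal]
  exact norm_ofReal_mul_exp_I_mul _ _

lemma two_sub_path_fst_sub_path_snd (θ : ℝ) :
    2 - (path θ).1 - (path θ).2 = ((2 - 2 * (1 - θ ^ 2) * Real.cos θ : ℝ) : ℂ) :=
  two_sub_mul_exp_sub_mul_exp_neg _ _

lemma path_mem_bidisk {θ : ℝ} (hθ : θ ≠ 0) (hθ1 : θ ^ 2 < 1) :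
    ‖(path θ).1‖ < 1 ∧ ‖(path θ).2‖ < 1 := by
  have hpos : 0 < θ ^ 2 := by positivity
  rw [norm_path_fst, norm_path_snd, abs_of_pos (by linarith)]
  constructor <;> linarith

lemma inv_eight_div_abs_le_norm_g_path {θ : ℝ} (hθ : θ ≠ 0) (hθ2 : |θ| < 1 / 2) :
    1 / 8 / |θ| ≤ ‖g (path θ)‖ := by
  have habs : 0 < |θ| := abs_pos.2 hθ
  have hsq : θ ^ 2 < 1 / 4 := by nlinarith [sq_abs θ]
  obtain ⟨hD, hD_le⟩ := two_sub_two_mul_cos_pos_and_le hθ (by linarith)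
  have hsin : |θ| / 2 ≤ |Real.sin θ| := by
    have hjordan := Real.mul_abs_le_abs_sin (x := θ) (by linarith [Real.pi_gt_three])
    have hpi : 1 / 2 ≤ 2 / Real.pi := by
      rw [div_le_div_iff₀ (by norm_num) Real.pi_pos]; linarith [Real.pi_le_four]
    nlinarith
  have hnum : 3 / 8 * |θ| ≤ ‖1 - (path θ).1‖ := calc
    3 / 8 * |θ| ≤ (1 - θ ^ 2) * |Real.sin θ| := by nlinarith
    _ = |(1 - (path θ).1).im| := by
      rw [path, im_one_sub_mul_exp_I_mul, abs_neg, abs_mul,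
        abs_of_pos (a := 1 - θ ^ 2) (by linarith)]
    _ ≤ ‖1 - (path θ).1‖ := abs_im_le_norm _
  rw [g, two_sub_path_fst_sub_path_snd, norm_div, norm_real, Real.norm_eq_abs,
    abs_of_pos hD, div_le_div_iff₀ habs hD]
  nlinarith [sq_abs θ, mul_le_mul_of_nonneg_right hnum habs.le]

end BidiskUnbounded

open BidiskUnbounded

theorem stmt11 :
    (∃ C > (0 : ℝ), ∃ δ > (0 : ℝ), ∀ θ : ℝ, θ ≠ 0 → |θ| < δ →
      C / |θ| ≤
        ‖(1 - ((1 - θ ^ 2 : ℝ) : ℂ) * Complex.exp (Complex.I * (θ : ℂ))) /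
          (2 - ((1 - θ ^ 2 : ℝ) : ℂ) * Complex.exp (Complex.I * (θ : ℂ)) -
            ((1 - θ ^ 2 : ℝ) : ℂ) * Complex.exp (-(Complex.I * (θ : ℂ))))‖) ∧
    (∀ B : ℝ, ∃ z : ℂ × ℂ, ‖z.1‖ < 1 ∧ ‖z.2‖ < 1 ∧
      B < ‖(1 - z.1) / (2 - z.1 - z.2)‖) := by
  refine ⟨⟨1 / 8, by norm_num, 1 / 2, by norm_num, fun θ hθ hδ ↦
    inv_eight_div_abs_le_norm_g_path hθ hδ⟩, fun B ↦ ?_⟩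
  set θ : ℝ := 1 / (8 * (|B| + 1))
  have hθ : 0 < θ := by positivity
  have hθ_lt : θ < 1 / 2 := by
    rw [div_lt_div_iff₀ (by positivity) (by norm_num)]
    linarith [abs_nonneg B]
  obtain ⟨h₁, h₂⟩ := path_mem_bidisk hθ.ne' (by nlinarith)
  refine ⟨path θ, h₁, h₂, ?_⟩
  calc B < |B| + 1 := by linarith [le_abs_self B]
    _ = 1 / 8 / |θ| := by rw [abs_of_pos hθ]; simp only [θ]; field_simp
    _ ≤ ‖g (path θ)‖ := inv_eight_div_abs_le_norm_g_path hθ.ne' (by rwa [abs_of_pos hθ])
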